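/- For the regularized mass-spring energy p(d) = (k/2)(√(dᵀd + ε_r) − l)² with k, ε_r, l > 0 and d ∈ ℝ³, the Hessian satisfies −k(1 + 2l/√ε_r)·I ⪯ ∇²p(d) ⪯ k(1 + 2l/√ε_r)·I for all d. -/

import Mathlib

/-!
Writing `p(d) = ψ(‖d‖²)` with `ψ(t) = (k/2)(√(t + ε) − l)²`, the gradient is `φ(‖d‖²) • d` with
`φ(t) = k(1 − l/√(t + ε))`, so the Hessian quadratic form is
`φ(‖d‖²)‖v‖² + 2φ'(‖d‖²)⟪d, v⟫² = k(1 − l/a)‖v‖² + (kl/a³)⟪d, v⟫²` where `a = √(‖d‖² + ε) ≥ √ε`.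
By Cauchy–Schwarz `⟪d, v⟫² ≤ a²‖v‖²`, so the first term is bounded by `k(1 + l/√ε)‖v‖²`
and the second by `(kl/√ε)‖v‖²`.
-/

open scoped RealInnerProductSpace

section RadialCalculus

variable {E : Type*} [NormedAddCommGroup E] [InnerProductSpace ℝ E] {d : E}

theorem HasDerivAt.hasGradientAt_comp_norm_sq [CompleteSpace E] {ψ : ℝ → ℝ} {ψ' : ℝ}
    (h : HasDerivAt ψ ψ' (‖d‖ ^ 2)) :
    HasGradientAt (fun x : E => ψ (‖x‖ ^ 2)) ((2 * ψ') • d) d := by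
  rw [hasGradientAt_iff_hasFDerivAt]
  refine (h.comp_hasFDerivAt d (hasStrictFDerivAt_norm_sq d).hasFDerivAt).congr_fderiv ?_
  ext v
  simp only [smul_apply, innerSL_apply_apply, smul_eq_mul,
    InnerProductSpace.toDual_apply_apply, real_inner_smul_left]
  ring

theorem HasDerivAt.hasFDerivAt_smul_self_comp_norm_sq {φ : ℝ → ℝ} {φ' : ℝ}
    (h : HasDerivAt φ φ' (‖d‖ ^ 2)) :
    HasFDerivAt (fun x : E => φ (‖x‖ ^ 2) • x)
      (φ (‖d‖ ^ 2) • ContinuousLinearMap.id ℝ E + ((2 * φ') • innerSL ℝ d).smulRight d) d := by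
  refine (h.comp_hasFDerivAt d (hasStrictFDerivAt_norm_sq d).hasFDerivAt).smul
    (hasFDerivAt_id d) |>.congr_fderiv ?_
  ext v
  simp only [add_apply, smul_apply, ContinuousLinearMap.smulRight_apply, Function.comp_apply, id]
  module

theorem inner_smul_id_add_smulRight_self_apply (c c' : ℝ) (d v : E) :
    ⟪(c • ContinuousLinearMap.id ℝ E + (c' • innerSL ℝ d).smulRight d) v, v⟫ =
      c * ‖v‖ ^ 2 + c' * ⟪d, v⟫ ^ 2 := by
  simp only [add_apply, smul_apply, ContinuousLinearMap.id_apply,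
    ContinuousLinearMap.smulRight_apply, innerSL_apply_apply, smul_eq_mul, inner_add_left,
    real_inner_smul_left, real_inner_self_eq_norm_sq]
  ring

end RadialCalculus

section Spring

variable {k ε l t : ℝ}

theorem hasDerivAt_spring_profile (ht : 0 < t + ε) :
    HasDerivAt (fun s => k / 2 * (√(s + ε) - l) ^ 2) (k / 2 * (1 - l / √(t + ε))) t := by
  have hsqrt := ((hasDerivAt_id' t).add_const ε).sqrt ht.ne'
  refine (((hsqrt.sub_const l).pow 2).const_mul (k / 2)).congr_deriv ?_
  have : 0 < √(t + ε) := Real.sqrt_pos.2 ht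
  field_simp
  ring

theorem hasDerivAt_spring_stiffness (ht : 0 < t + ε) :
    HasDerivAt (fun s => k * (1 - l / √(s + ε))) (k * l / (2 * √(t + ε) ^ 3)) t := by
  have hsqrt := ((hasDerivAt_id' t).add_const ε).sqrt ht.ne'
  have : 0 < √(t + ε) := Real.sqrt_pos.2 ht
  refine ((((hasDerivAt_const t l).div hsqrt this.ne').const_sub 1).const_mul k).congr_deriv ?_
  field_simp
  ring

variable {E : Type*} [NormedAddCommGroup E] [InnerProductSpace ℝ E] [CompleteSpace E]

theorem gradient_spring_energy (hε : 0 < ε) :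
    gradient (fun d : E => k / 2 * (√(‖d‖ ^ 2 + ε) - l) ^ 2) =
      fun d => (k * (1 - l / √(‖d‖ ^ 2 + ε))) • d := by
  funext d
  refine ((hasDerivAt_spring_profile (by positivity)).hasGradientAt_comp_norm_sq).gradient.trans ?_
  congr 1
  ring

theorem inner_fderiv_gradient_spring_energy (hε : 0 < ε) (d v : E) :
    ⟪fderiv ℝ (gradient fun d : E => k / 2 * (√(‖d‖ ^ 2 + ε) - l) ^ 2) d v, v⟫ =
      k * (1 - l / √(‖d‖ ^ 2 + ε)) * ‖v‖ ^ 2 + k * l * ⟪d, v⟫ ^ 2 / √(‖d‖ ^ 2 + ε) ^ 3 := by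
  have ht : 0 < ‖d‖ ^ 2 + ε := by positivity
  rw [gradient_spring_energy hε,
    (hasDerivAt_spring_stiffness ht).hasFDerivAt_smul_self_comp_norm_sq.fderiv,
    inner_smul_id_add_smulRight_self_apply]
  have : 0 < √(‖d‖ ^ 2 + ε) := Real.sqrt_pos.2 ht
  field_simp

end Spring

theorem abs_spring_hessian_form_le {k l a b t s : ℝ} (hk : 0 ≤ k) (hl : 0 ≤ l) (hb : 0 < b)
    (hba : b ≤ a) (hts : |t| ≤ a * s) :
    |k * (1 - l / a) * s ^ 2 + k * l * t ^ 2 / a ^ 3| ≤ k * (1 + 2 * l / b) * s ^ 2 := by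
  have ha : 0 < a := hb.trans_le hba
  have ht2 : t ^ 2 ≤ a ^ 2 * s ^ 2 := by
    rw [← sq_abs, ← mul_pow]
    exact pow_le_pow_left₀ (abs_nonneg t) hts 2
  have hstretch : |k * (1 - l / a) * s ^ 2| ≤ k * (1 + l / b) * s ^ 2 := by
    rw [abs_mul, abs_mul, abs_of_nonneg hk, abs_of_nonneg (sq_nonneg s)]
    gcongr
    calc |1 - l / a| ≤ 1 + l / a := by
          rw [abs_le]; constructor <;> nlinarith [div_nonneg hl ha.le]
      _ ≤ 1 + l / b := by gcongr
  have hbend : |k * l * t ^ 2 / a ^ 3| ≤ k * l / b * s ^ 2 := by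
    rw [abs_of_nonneg (by positivity)]
    calc k * l * t ^ 2 / a ^ 3 ≤ k * l * (a ^ 2 * s ^ 2) / a ^ 3 := by gcongr
      _ = k * l / a * s ^ 2 := by field_simp
      _ ≤ k * l / b * s ^ 2 := by gcongr
  calc _ ≤ |k * (1 - l / a) * s ^ 2| + |k * l * t ^ 2 / a ^ 3| := abs_add_le _ _
    _ ≤ k * (1 + l / b) * s ^ 2 + k * l / b * s ^ 2 := add_le_add hstretch hbend
    _ = k * (1 + 2 * l / b) * s ^ 2 := by ring

/-- The regularized mass-spring energy `p(d) = (k/2)(√(‖d‖² + ε_r) − l)²` has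
Hessian bounded in absolute value by `k(1 + 2l/√ε_r)`. -/
theorem stmt4 (k εr l : ℝ) (hk : 0 < k) (hεr : 0 < εr) (hl : 0 < l) :
    ∀ (d v : EuclideanSpace ℝ (Fin 3)),
      |⟪(fderiv ℝ (gradient (fun d : EuclideanSpace ℝ (Fin 3) =>
          k / 2 * (Real.sqrt (‖d‖ ^ 2 + εr) - l) ^ 2)) d) v, v⟫| ≤
        k * (1 + 2 * l / Real.sqrt εr) * ‖v‖ ^ 2 := by
  intro d v
  rw [inner_fderiv_gradient_spring_energy hεr]
  have hnorm : ‖d‖ ≤ √(‖d‖ ^ 2 + εr) :=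
    Real.le_sqrt_of_sq_le (le_add_of_nonneg_right hεr.le)
  refine abs_spring_hessian_form_le hk.le hl.le (Real.sqrt_pos.2 hεr)
    (Real.sqrt_le_sqrt (le_add_of_nonneg_left (sq_nonneg _))) ?_
  calc |⟪d, v⟫| ≤ ‖d‖ * ‖v‖ := abs_real_inner_le_norm d v
    _ ≤ √(‖d‖ ^ 2 + εr) * ‖v‖ := by gcongr
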